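/- Every positive integer appears in the Yellowstone sequence: for every k ≥ 1 there exists n with a(n) = k. -/

import Mathlib

/-- The Yellowstone sequence: a 1 = 1, a 2 = 2, a 3 = 3, and for n ≥ 4,
`a n` is the least positive integer not among `a 1, …, a (n-1)` which shares
a common factor with `a (n-2)` and is coprime to `a (n-1)`. -/
def IsYellowstone (a : ℕ → ℕ) : Prop :=
  a 1 = 1 ∧ a 2 = 2 ∧ a 3 = 3 ∧
  ∀ n, 4 ≤ n →
    IsLeast {k : ℕ | 0 < k ∧ (∀ m, 1 ≤ m → m < n → a m ≠ k) ∧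
      1 < Nat.gcd k (a (n - 2)) ∧ Nat.gcd k (a (n - 1)) = 1} (a n)

/-!
If a positive integer `w` never occurs, then from some point on it is never a candidate,
because the terms exceed it; so once `w` shares a factor with `a n` it shares one with
`a (n + 1)` too. Hence eventually `w` is either coprime to every term or to none.

Applied to `w = p ^ e`, and since consecutive terms are coprime, this shows that every power
of a prime `p` occurs as soon as `p` divides infinitely many terms. Such a prime exists:
otherwise every prime, `2` included, eventually stops dividing the terms, so for large `n`
the least prime factor `r` of `a n` exceeds every even term; then `2 r` is a candidate for
`a (n + 2)`, which forces `a (n + 2)` to be a prime dividing `a n`, and doing this twice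
repeats a value. Next every prime `q` divides infinitely many terms: otherwise, whenever
`a (n + 2)` is a power of `p` with `n` large, `q p ^ (B + 1)` (with `B` bounding the
multiples of `q` that occur) is a candidate smaller than `a (n + 2)`.

Finally a missing `k ≥ 2` cannot be eventually coprime to the terms, since its least prime
factor divides infinitely many of them, nor eventually share a factor with every term,
since the powers of a prime `q > k` occur infinitely often.
-/

open Filter Set

theorem Filter.eventually_or_eventually_not_of_eventually_imp_succ {P : ℕ → Prop}
    (h : ∀ᶠ n in atTop, P n → P (n + 1)) :
    (∀ᶠ n in atTop, P n) ∨ ∀ᶠ n in atTop, ¬ P n := by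
  obtain ⟨N, hN⟩ := eventually_atTop.1 h
  by_cases hP : ∃ n, N ≤ n ∧ P n
  · obtain ⟨n₀, hn₀, hPn₀⟩ := hP
    refine Or.inl (eventually_atTop.2 ⟨n₀, fun n hn => ?_⟩)
    induction n, hn using Nat.le_induction with
    | base => exact hPn₀
    | succ n hn ih => exact hN n (hn₀.trans hn) ih
  · push Not at hP
    exact Or.inr (eventually_atTop.2 ⟨N, hP⟩)

theorem Nat.frequently_mem_of_infinite_subset_range {α : Type*} {f : ℕ → α} {S : Set α}
    (hS : S.Infinite) (hsub : S ⊆ range f) : ∃ᶠ n in atTop, f n ∈ S :=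
  Nat.frequently_atTop_iff_infinite.2 <|
    Set.Infinite.of_image f (s := f ⁻¹' S) <| by rwa [image_preimage_eq_of_subset hsub]

theorem Nat.exists_le_of_eventually_not {f : ℕ → ℕ} {P : ℕ → Prop}
    (h : ∀ᶠ n in atTop, ¬ P (f n)) : ∃ B, ∀ m, P (f m) → f m ≤ B := by
  obtain ⟨N, hN⟩ := eventually_atTop.1 h
  refine ⟨(Finset.range N).sup f, fun m hm => Finset.le_sup (Finset.mem_range.2 ?_)⟩
  by_contra! hNm
  exact hN m hNm hm

theorem Nat.eventually_forall_prime_dvd_gt {α : Type*} {l : Filter α} {f : α → ℕ}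
    (h : ∀ p, p.Prime → ∀ᶠ x in l, ¬ p ∣ f x) (B : ℕ) :
    ∀ᶠ x in l, ∀ p, p.Prime → p ∣ f x → B < p := by
  have hsmall : ∀ᶠ x in l, ∀ p ∈ Iic B, p.Prime → ¬ p ∣ f x :=
    (eventually_all_finite (finite_Iic B)).2 fun p _ =>
      if hp : p.Prime then (h p hp).mono fun _ hx _ => hx
      else .of_forall fun _ hp' => (hp hp').elim
  exact hsmall.mono fun x hx p hp hdvd => not_le.1 fun hle => hx p hle hp hdvd

theorem Nat.Prime.dvd_of_not_coprime_pow {p e x : ℕ} (hp : p.Prime)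
    (h : ¬ Nat.Coprime (p ^ e) x) : p ∣ x := by
  contrapose! h
  exact Nat.Coprime.pow_left e (hp.coprime_iff_not_dvd.2 h)

namespace IsYellowstone

variable {a : ℕ → ℕ} {m n : ℕ}

theorem pos (ha : IsYellowstone a) (hn : 1 ≤ n) : 0 < a n := by
  rcases le_or_gt 4 n with h | h
  · exact (ha.2.2.2 n h).1.1
  · interval_cases n <;> simp [ha.1, ha.2.1, ha.2.2.1]

theorem ne_of_lt (ha : IsYellowstone a) (hm : 1 ≤ m) (hmn : m < n) : a m ≠ a n := by
  rcases le_or_gt 4 n with h | h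
  · exact (ha.2.2.2 n h).1.2.1 m hm hmn
  · interval_cases n <;> interval_cases m <;> simp [ha.1, ha.2.1, ha.2.2.1]

theorem one_lt (ha : IsYellowstone a) (hn : 2 ≤ n) : 1 < a n := by
  have hne := ha.ne_of_lt le_rfl (show 1 < n by omega)
  have hpos := ha.pos (show 1 ≤ n by omega)
  rw [ha.1] at hne
  omega

theorem coprime_succ (ha : IsYellowstone a) (hn : 2 ≤ n) : Nat.Coprime (a (n + 1)) (a n) := by
  rcases le_or_gt 3 n with h | h
  · simpa using (ha.2.2.2 (n + 1) (by omega)).1.2.2.2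
  · obtain rfl : n = 2 := by omega
    rw [ha.2.2.1, ha.2.1]
    decide

theorem not_coprime_add_two (ha : IsYellowstone a) (hn : 2 ≤ n) :
    ¬ Nat.Coprime (a (n + 2)) (a n) := by
  have h := (ha.2.2.2 (n + 2) (by omega)).1.2.2.1
  simp only [Nat.add_sub_cancel] at h
  exact fun hcop => h.ne' hcop

theorem le_of_candidate (ha : IsYellowstone a) (hn : 2 ≤ n) {c : ℕ} (hc : 0 < c)
    (hnew : ∀ m, 1 ≤ m → a m ≠ c) (hshare : ¬ Nat.Coprime c (a n))
    (hcop : Nat.Coprime c (a (n + 1))) : a (n + 2) ≤ c := by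
  have hgcd : 1 < Nat.gcd c (a n) :=
    lt_of_le_of_ne (Nat.gcd_pos_of_pos_left _ hc) (Ne.symm hshare)
  exact (ha.2.2.2 (n + 2) (by omega)).2 ⟨hc, fun m hm _ => hnew m hm, by simpa using hgcd,
    by simpa using hcop⟩

theorem not_dvd_succ_of_dvd (ha : IsYellowstone a) (hn : 2 ≤ n) {p : ℕ} (hp : p.Prime)
    (hdvd : p ∣ a n) : ¬ p ∣ a (n + 1) := fun hdvd₁ =>
  hp.coprime_iff_not_dvd.1 ((ha.coprime_succ hn).coprime_dvd_left hdvd₁) hdvd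

theorem tendsto_atTop (ha : IsYellowstone a) : Tendsto a atTop atTop := by
  refine (tendsto_add_atTop_iff_nat 1).1 (Function.Injective.nat_tendsto_atTop fun m n h => ?_)
  by_contra hne
  rcases Nat.lt_or_gt_of_ne hne with hmn | hmn
  · exact ha.ne_of_lt (by omega) (by omega) h
  · exact ha.ne_of_lt (by omega) (by omega) h.symm

theorem eventually_coprime_or_eventually_not_coprime (ha : IsYellowstone a) {w : ℕ}
    (hw : 0 < w) (hmiss : ∀ n, 1 ≤ n → a n ≠ w) :
    (∀ᶠ n in atTop, Nat.Coprime w (a n)) ∨ ∀ᶠ n in atTop, ¬ Nat.Coprime w (a n) := by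
  have hstep : ∀ᶠ n in atTop, ¬ Nat.Coprime w (a n) → ¬ Nat.Coprime w (a (n + 1)) := by
    filter_upwards [eventually_ge_atTop 2,
      ((tendsto_add_atTop_iff_nat 2).2 ha.tendsto_atTop).eventually_gt_atTop w]
      with n hn hlarge hshare hcop
    exact (ha.le_of_candidate hn hw hmiss hshare hcop).not_gt hlarge
  exact (eventually_or_eventually_not_of_eventually_imp_succ hstep).symm.imp_left
    (·.mono fun _ => not_not.1)

theorem pow_mem_range (ha : IsYellowstone a) {p : ℕ} (hp : p.Prime)
    (halive : ∃ᶠ n in atTop, p ∣ a n) (e : ℕ) : p ^ e ∈ range a := by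
  rcases e.eq_zero_or_pos with rfl | he
  · exact ⟨1, by rw [ha.1, pow_zero]⟩
  by_contra hmiss
  rcases ha.eventually_coprime_or_eventually_not_coprime (pow_pos hp.pos e)
    (fun n _ h => hmiss ⟨n, h⟩) with hcop | hshare
  · obtain ⟨n, hdvd, hc⟩ := (halive.and_eventually hcop).exists
    exact hp.coprime_iff_not_dvd.1 (hc.coprime_dvd_left (dvd_pow_self p he.ne')) hdvd
  · have hdvd : ∀ᶠ n in atTop, p ∣ a n := hshare.mono fun _ => hp.dvd_of_not_coprime_pow
    obtain ⟨n, hn, hdvd₀, hdvd₁⟩ :=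
      ((eventually_ge_atTop 2).and (hdvd.and ((tendsto_add_atTop_nat 1).eventually hdvd))).exists
    exact ha.not_dvd_succ_of_dvd hn hp hdvd₀ hdvd₁

theorem frequently_eq_pow (ha : IsYellowstone a) {p : ℕ} (hp : p.Prime)
    (halive : ∃ᶠ n in atTop, p ∣ a n) : ∃ᶠ n in atTop, a n ∈ range (p ^ ·) :=
  Nat.frequently_mem_of_infinite_subset_range
    (infinite_range_of_injective (Nat.pow_right_injective hp.two_le))
    (range_subset_iff.2 (ha.pow_mem_range hp halive))

theorem prime_and_dvd_of_forall_prime_dvd_gt (ha : IsYellowstone a) (hn : 2 ≤ n) {B : ℕ}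
    (heven : ∀ m, 2 ∣ a m → a m ≤ B) (hodd₁ : ¬ 2 ∣ a (n + 1))
    (hodd₂ : ¬ 2 ∣ a (n + 2)) (hlarge : ∀ p, p.Prime → p ∣ a n → B < p) :
    (a (n + 2)).Prime ∧ a (n + 2) ∣ a n := by
  set r := (a n).minFac
  have hr : r.Prime := Nat.minFac_prime (ha.one_lt hn).ne'
  have hrB : B < r := hlarge r hr (Nat.minFac_dvd _)
  have hle : a (n + 2) ≤ 2 * r := by
    refine ha.le_of_candidate hn (Nat.mul_pos two_pos hr.pos) (fun m _ hm => ?_) ?_ ?_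
    · have := heven m (hm ▸ dvd_mul_right 2 r)
      omega
    · exact Nat.Prime.not_coprime_iff_dvd.2 ⟨r, hr, dvd_mul_left r 2, Nat.minFac_dvd _⟩
    · exact Nat.Coprime.mul_left (Nat.prime_two.coprime_iff_not_dvd.2 hodd₁)
        (hr.coprime_iff_not_dvd.2 (ha.not_dvd_succ_of_dvd hn hr (Nat.minFac_dvd _)))
  obtain ⟨s, hs, ⟨t, ht⟩, hsn⟩ :=
    Nat.Prime.not_coprime_iff_dvd.1 (ha.not_coprime_add_two hn)
  have hrs : r ≤ s := Nat.minFac_le_of_dvd hs.two_le hsn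
  -- `a (n + 2) = s t ≤ 2 r ≤ 2 s` is odd, so `t = 1`.
  have ht2 : t ≤ 2 := Nat.le_of_mul_le_mul_left (by nlinarith) hs.pos
  have hpos := ha.pos (show 1 ≤ n + 2 by omega)
  interval_cases t
  · rw [ht, mul_zero] at hpos
    exact (lt_irrefl 0 hpos).elim
  · rw [ht, mul_one]
    exact ⟨hs, hsn⟩
  · exact (hodd₂ ⟨s, by rw [ht, mul_comm]⟩).elim

theorem exists_prime_frequently_dvd (ha : IsYellowstone a) :
    ∃ p, p.Prime ∧ ∃ᶠ n in atTop, p ∣ a n := by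
  by_contra! hdead
  obtain ⟨B, hB⟩ := Nat.exists_le_of_eventually_not (hdead 2 Nat.prime_two)
  obtain ⟨N, hN⟩ := eventually_atTop.1 ((hdead 2 Nat.prime_two).and
    ((Nat.eventually_forall_prime_dvd_gt hdead B).and (eventually_ge_atTop 2)))
  have hstep : ∀ n, N ≤ n → (a (n + 2)).Prime ∧ a (n + 2) ∣ a n := fun n hn =>
    ha.prime_and_dvd_of_forall_prime_dvd_gt (hN n hn).2.2 hB (hN (n + 1) (by omega)).1
      (hN (n + 2) (by omega)).1 (hN n hn).2.1
  have hprime := (hstep N le_rfl).1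
  obtain ⟨hprime', hdvd⟩ := hstep (N + 2) (by omega)
  exact ha.ne_of_lt (by omega) (by omega) ((Nat.prime_dvd_prime_iff_eq hprime' hprime).1 hdvd).symm

theorem frequently_dvd (ha : IsYellowstone a) {q : ℕ} (hq : q.Prime) :
    ∃ᶠ n in atTop, q ∣ a n := by
  by_contra hdead
  rw [not_frequently] at hdead
  obtain ⟨p, hp, halive⟩ := ha.exists_prime_frequently_dvd
  obtain ⟨B, hB⟩ := Nat.exists_le_of_eventually_not hdead
  set c := q * p ^ (B + 1)
  have hBc : B < c := (B.lt_succ_self.trans (Nat.lt_pow_self hp.one_lt)).trans_le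
    (Nat.le_mul_of_pos_left _ hq.pos)
  obtain ⟨N, hN⟩ := eventually_atTop.1 ((eventually_ge_atTop 2).and (hdead.and
    (((tendsto_add_atTop_iff_nat 2).2 ha.tendsto_atTop).eventually_gt_atTop c)))
  obtain ⟨i, hi, e, hpow⟩ := (ha.frequently_eq_pow hp halive).forall_exists_of_atTop (N + 2)
  obtain ⟨n, rfl⟩ : ∃ n, i = n + 2 := ⟨i - 2, by omega⟩
  obtain ⟨hn, -, hlarge⟩ := hN n (by omega)
  have hpn : p ∣ a n := hp.dvd_of_not_coprime_pow (hpow ▸ ha.not_coprime_add_two hn)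
  refine (ha.le_of_candidate hn (Nat.mul_pos hq.pos (pow_pos hp.pos _))
    (fun m _ hm => ?_) ?_ ?_).not_gt hlarge
  · exact (hB m (hm ▸ dvd_mul_right q _)).not_gt (hm ▸ hBc)
  · exact Nat.Prime.not_coprime_iff_dvd.2
      ⟨p, hp, dvd_mul_of_dvd_right (dvd_pow_self p B.succ_ne_zero) q, hpn⟩
  · exact Nat.Coprime.mul_left (hq.coprime_iff_not_dvd.2 (hN (n + 1) (by omega)).2.1)
      (Nat.Coprime.pow_left _ (hp.coprime_iff_not_dvd.2 (ha.not_dvd_succ_of_dvd hn hp hpn)))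

end IsYellowstone

theorem yellowstone_surjective (a : ℕ → ℕ) (ha : IsYellowstone a) :
    ∀ k, 1 ≤ k → ∃ n, 1 ≤ n ∧ a n = k := by
  intro k hk
  by_contra! hmiss
  rcases ha.eventually_coprime_or_eventually_not_coprime hk hmiss with hcop | hshare
  · have hk1 : k ≠ 1 := fun h => hmiss 1 le_rfl (ha.1.trans h.symm)
    have hp := Nat.minFac_prime hk1
    obtain ⟨n, hdvd, hc⟩ := ((ha.frequently_dvd hp).and_eventually hcop).exists
    exact hp.coprime_iff_not_dvd.1 (hc.coprime_dvd_left (Nat.minFac_dvd k)) hdvd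
  · obtain ⟨q, hkq, hq⟩ := Nat.exists_infinite_primes (k + 1)
    obtain ⟨n, ⟨e, hpow⟩, hnc⟩ :=
      ((ha.frequently_eq_pow hq (ha.frequently_dvd hq)).and_eventually hshare).exists
    have hqk : q ∣ k := hq.dvd_of_not_coprime_pow (by rwa [Nat.coprime_comm, ← hpow] at hnc)
    have := Nat.le_of_dvd hk hqk
    omega
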